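/- Let a₁,a₂,a₃,a₄ be nonzero integers with α = a₁a₂a₃a₄ and ψ₁(x)=Σaᵢxᵢ², ψ̃₁(w)=Σᵢ(α/aᵢ)wᵢ². For every odd prime p with p ∤ 2α and every w∈ℤ⁴: if p divides ψ̃₁(w) then S_{1,p}(w) = χ_p(α)·p²·(p−1), and if p does not divide ψ̃₁(w) then S_{1,p}(w) = −χ_p(α)·p². -/

import Mathlib

/-- `ψ(c, x) = c₁x₁² + c₂x₂² + c₃x₃² + c₄x₄²` for a diagonal quaternary quadratic form. -/
def psi (c : Fin 4 → ℤ) (x : Fin 4 → ℤ) : ℤ := ∑ i, c i * x i ^ 2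

/-- The adjoint form `ψ̃₁(w) = Σᵢ (α/aᵢ)·wᵢ²` where `α = a₁a₂a₃a₄`. -/
def psit (a : Fin 4 → ℤ) (w : Fin 4 → ℤ) : ℤ := ∑ i, ((∏ j, a j) / a i) * w i ^ 2

/-- The complete exponential sum
`S_{1,c}(w) = Σ*_{a mod c} Σ_{k mod c} e((aψ₁(k)+w·k)/c)` with `e(t) = exp(2πit)`. -/
noncomputable def S1 (a : Fin 4 → ℤ) (c : ℕ) (w : Fin 4 → ℤ) : ℂ :=
  ∑ x ∈ (Finset.range c).filter (fun x => Nat.Coprime x c),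
    ∑ k ∈ Fintype.piFinset fun _ : Fin 4 => Finset.range c,
      Complex.exp (2 * (Real.pi : ℂ) * Complex.I *
        (((x : ℂ) * ((psi a (fun i => (k i : ℤ)) : ℤ) : ℂ) + ∑ i, (w i : ℂ) * (k i : ℂ))
          / (c : ℂ)))

/-!
Over `𝔽_p` write `ψ(x) = e(x/p)`. For a fixed unit `u` the sum over `k` factors into the four sums
`∑ₖ ψ(u aᵢ k² + wᵢ k)`. Completing the square turns each into `χ(u aᵢ) g ψ(-wᵢ²/(4 u aᵢ))`, with
`g` the quadratic Gauss sum, and `g⁴ = (χ(-1) p)² = p²`. As `χ(u)⁴ = 1` and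
`∑ᵢ wᵢ²/aᵢ = ψ̃₁(w)/α`, the sum over `k` is `χ(α) p² ψ(c u⁻¹)` with `c = -ψ̃₁(w)/(4α)`; summing
over `u` leaves `∑_{u ≠ 0} ψ(c u)`, which is `p - 1` when `p ∣ ψ̃₁(w)` and `-1` otherwise.
-/

open Finset

theorem AddChar.map_finset_sum {A M ι : Type*} [AddCommMonoid A] [CommMonoid M]
    (ψ : AddChar A M) (s : Finset ι) (f : ι → A) : ψ (∑ i ∈ s, f i) = ∏ i ∈ s, ψ (f i) := by
  classical
  induction s using Finset.induction_on with
  | empty => simp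
  | insert i s hi ih => rw [sum_insert hi, prod_insert hi, AddChar.map_add_eq_mul, ih]

section QuadraticGaussSum

variable {F R : Type*} [Field F] [Fintype F] [DecidableEq F] [CommRing R]

local notation "χ" => MulChar.ringHomComp (quadraticChar F) (Int.castRingHom R)

theorem sum_comp_sq (hF : ringChar F ≠ 2) (f : F → R) :
    ∑ x, f (x ^ 2) = ∑ t, (1 + χ t) * f t := by
  rw [← sum_fiberwise' univ (· ^ 2) f]
  refine sum_congr rfl fun t _ => ?_
  have hcard := quadraticChar_card_sqrts hF t
  rw [Set.toFinset_ofPred] at hcard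
  rw [sum_const, nsmul_eq_mul, MulChar.ringHomComp_apply, eq_intCast, add_comm (1 : R)]
  exact_mod_cast congrArg (fun z : ℤ => ((z : R) * f t)) hcard

variable [IsDomain R] {ψ : AddChar F R}

theorem sum_addChar_mul_sq (hF : ringChar F ≠ 2) (hψ : ψ.IsPrimitive) {a : F} (ha : a ≠ 0) :
    ∑ x, ψ (a * x ^ 2) = χ a * gaussSum χ ψ := by
  have hlin : ∑ t, ψ (a * t) = 0 := by
    simpa [mul_comm a, ha] using AddChar.sum_mulShift a hψ
  have hgauss : ∑ t, χ t * ψ (a * t) = χ a * gaussSum χ ψ := by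
    rw [← gaussSum_mulShift χ ψ (Units.mk0 a ha), ← mul_assoc, Units.val_mk0,
      ← map_mul, ← sq, MulChar.ringHomComp_apply, quadraticChar_sq_one' ha]
    simp [gaussSum, mul_comm a]
  rw [sum_comp_sq hF (fun t => ψ (a * t))]
  simp only [add_mul, one_mul, sum_add_distrib, hlin, hgauss, zero_add]

theorem sum_addChar_quadratic (hF : ringChar F ≠ 2) (hψ : ψ.IsPrimitive) {a : F} (ha : a ≠ 0)
    (b : F) : ∑ x, ψ (a * x ^ 2 + b * x) = χ a * gaussSum χ ψ * ψ (-b ^ 2 / (4 * a)) := by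
  have h2 : (2 : F) ≠ 0 := Ring.two_ne_zero hF
  have h4 : (4 : F) ≠ 0 := by simpa [show (4 : F) = 2 * 2 by norm_num] using mul_ne_zero h2 h2
  have hsq (x : F) : a * (x - b / (2 * a)) ^ 2 + b * (x - b / (2 * a))
      = a * x ^ 2 + -b ^ 2 / (4 * a) := by
    field_simp
    ring
  rw [← (Equiv.subRight (b / (2 * a))).sum_comp]
  simp only [Equiv.subRight_apply, hsq, AddChar.map_add_eq_mul, ← sum_mul,
    sum_addChar_mul_sq hF hψ ha]

theorem sum_addChar_diagonal_quadratic {ι : Type*} [Fintype ι] [DecidableEq ι]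
    (hF : ringChar F ≠ 2) (hψ : ψ.IsPrimitive) {a : ι → F} (ha : ∀ i, a i ≠ 0) (b : ι → F) :
    ∑ x : ι → F, ψ (∑ i, (a i * x i ^ 2 + b i * x i))
      = χ (∏ i, a i) * gaussSum χ ψ ^ Fintype.card ι * ψ (∑ i, -b i ^ 2 / (4 * a i)) := by
  simp only [AddChar.map_finset_sum]
  rw [← Fintype.prod_sum fun i t => ψ (a i * t ^ 2 + b i * t)]
  simp only [sum_addChar_quadratic hF hψ (ha _), prod_mul_distrib, map_prod, prod_const, card_univ]

theorem gaussSum_quadraticChar_pow_four [CharZero R] (hF : ringChar F ≠ 2) (hψ : ψ.IsPrimitive) :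
    gaussSum χ ψ ^ 4 = (Fintype.card F : R) ^ 2 := by
  have hχ : χ ≠ 1 :=
    (MulChar.ringHomComp_ne_one_iff Int.cast_injective).mpr (quadraticChar_ne_one hF)
  rw [show 4 = 2 * 2 by rfl, pow_mul, gaussSum_sq hχ ((quadraticChar_isQuadratic F).comp _) hψ,
    mul_pow, ← map_pow, neg_one_sq, map_one, one_mul]

theorem sum_units_addChar_mul (hψ : ψ.IsPrimitive) (c : F) :
    ∑ u : Fˣ, ψ (c * u) = if c = 0 then (Fintype.card F : R) - 1 else -1 := by
  have hsplit : ∑ x : F, ψ (x * c) = 1 + ∑ u : Fˣ, ψ (c * u) := by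
    rw [Fintype.sum_eq_add_sum_subtype_ne _ 0, zero_mul, AddChar.map_zero_eq_one,
      ← unitsEquivNeZero.sum_comp]
    simp [mul_comm c]
  rw [eq_sub_of_add_eq' hsplit.symm, AddChar.sum_mulShift c hψ]
  split_ifs <;> ring

end QuadraticGaussSum

theorem sum_piFinset_range_eq_sum_zmod {ι M : Type*} [Fintype ι] [DecidableEq ι] [AddCommMonoid M]
    (n : ℕ) [NeZero n] (f : (ι → ZMod n) → M) :
    ∑ k ∈ Fintype.piFinset fun _ : ι => range n, f (fun i => (k i : ZMod n)) = ∑ k, f k := by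
  refine sum_nbij' (fun k i => (k i : ZMod n)) (fun k i => (k i).val) (by simp)
    (fun k _ => Fintype.mem_piFinset.mpr fun i => mem_range.mpr (ZMod.val_lt _))
    (fun k hk => funext fun i => ZMod.val_cast_of_lt (mem_range.mp (Fintype.mem_piFinset.mp hk i)))
    (fun k _ => funext fun i => ZMod.natCast_zmod_val _) (fun _ _ => rfl)

theorem sum_coprime_range_eq_sum_units {M : Type*} [AddCommMonoid M] (n : ℕ) [NeZero n]
    (f : ZMod n → M) :
    ∑ x ∈ (range n).filter (fun x => x.Coprime n), f x = ∑ u : (ZMod n)ˣ, f u := by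
  refine sum_bij' (fun x hx => ZMod.unitOfCoprime x (mem_filter.mp hx).2)
    (fun u _ => (u : ZMod n).val) (fun _ _ => mem_univ _)
    (fun u _ => mem_filter.mpr ⟨mem_range.mpr (ZMod.val_lt _), ZMod.val_coe_unit_coprime u⟩)
    (fun x hx => ?_) (fun u _ => Units.ext (ZMod.natCast_zmod_val _)) (fun _ _ => rfl)
  rw [ZMod.coe_unitOfCoprime, ZMod.val_cast_of_lt (mem_range.mp (mem_filter.mp hx).1)]

theorem S1_eq_sum_units (a : Fin 4 → ℤ) (c : ℕ) [NeZero c] (w : Fin 4 → ℤ) :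
    S1 a c w = ∑ u : (ZMod c)ˣ, ∑ k : Fin 4 → ZMod c,
      ZMod.stdAddChar (∑ i, ((u : ZMod c) * (a i : ZMod c) * k i ^ 2 + (w i : ZMod c) * k i)) := by
  rw [S1, ← sum_coprime_range_eq_sum_units c fun x => ∑ k : Fin 4 → ZMod c,
    ZMod.stdAddChar (∑ i, (x * (a i : ZMod c) * k i ^ 2 + (w i : ZMod c) * k i))]
  refine sum_congr rfl fun x _ => ?_
  rw [← sum_piFinset_range_eq_sum_zmod c]
  refine sum_congr rfl fun k _ => ?_
  have h := ZMod.stdAddChar_coe (N := c) (x * psi a (fun i => k i) + ∑ i, w i * k i)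
  push_cast [psi] at h
  rw [mul_div_assoc] at h
  rw [psi]
  push_cast
  convert h.symm using 2
  simp only [mul_sum, ← sum_add_distrib]
  exact sum_congr rfl fun i _ => by ring

theorem cast_psit {K : Type*} [Field K] (a w : Fin 4 → ℤ) (ha : ∀ i, (a i : K) ≠ 0) :
    (psit a w : K) = (∏ i, (a i : K)) * ∑ i, (w i : K) ^ 2 / a i := by
  rw [psit, mul_sum]
  push_cast
  refine sum_congr rfl fun i _ => ?_
  rw [Int.cast_div (dvd_prod_of_mem a (mem_univ i)) (ha i)]
  push_cast
  ring

theorem S1_prime_eq (a w : Fin 4 → ℤ) {p : ℕ} [Fact p.Prime] (hp2 : p ≠ 2)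
    (hα : ¬ (p : ℤ) ∣ ∏ i, a i) :
    S1 a p w = legendreSym p (∏ i, a i) * (p : ℂ) ^ 2 *
      ∑ u : (ZMod p)ˣ, ZMod.stdAddChar ((psit a w : ZMod p) * (u : ZMod p)) := by
  have hF : ringChar (ZMod p) ≠ 2 := by rwa [ZMod.ringChar_zmod_n]
  have hψ := ZMod.isPrimitive_stdAddChar p
  have hα' : ∏ i, (a i : ZMod p) ≠ 0 := by
    rwa [← Int.cast_prod, Ne, ZMod.intCast_zmod_eq_zero_iff_dvd]
  have ha : ∀ i, (a i : ZMod p) ≠ 0 := fun i => prod_ne_zero_iff.mp hα' i (mem_univ i)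
  have h2 : (2 : ZMod p) ≠ 0 := Ring.two_ne_zero hF
  have hκ : -1 / (4 * ∏ i, (a i : ZMod p)) ≠ 0 := by
    have h4 : (4 : ZMod p) ≠ 0 := by
      simpa [show (4 : ZMod p) = 2 * 2 by norm_num] using mul_ne_zero h2 h2
    exact div_ne_zero (neg_ne_zero.mpr one_ne_zero) (mul_ne_zero h4 hα')
  rw [S1_eq_sum_units, mul_sum]
  -- reindex by `u ↦ κ u⁻¹` with `κ = -1/(4α)`, which turns the phase `ψ̃₁(w) κ u⁻¹` into `ψ̃₁(w) u`
  refine Fintype.sum_equiv ((Equiv.inv _).trans (Equiv.mulLeft (Units.mk0 _ hκ))) _ _ fun u => ?_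
  have hu : (u : ZMod p) ≠ 0 := u.ne_zero
  have hcoef : ∏ i, ((u : ZMod p) * a i) = ((u : ZMod p) ^ 2) ^ 2 * ∏ i, (a i : ZMod p) := by
    rw [prod_mul_distrib, prod_const, card_univ, Fintype.card_fin]; ring
  have harg : ∑ i, -(w i : ZMod p) ^ 2 / (4 * ((u : ZMod p) * a i))
      = (psit a w : ZMod p) * (-1 / (4 * ∏ i, (a i : ZMod p)) * (u : ZMod p)⁻¹) := by
    calc ∑ i, -(w i : ZMod p) ^ 2 / (4 * ((u : ZMod p) * a i))
        = ∑ i, (w i : ZMod p) ^ 2 / a i * (-1 / (4 * u)) :=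
          sum_congr rfl fun i _ => by have := ha i; field_simp
      _ = _ := by
          rw [← sum_mul, cast_psit a w ha]
          field_simp
  rw [sum_addChar_diagonal_quadratic hF hψ (fun i => mul_ne_zero hu (ha i)), Fintype.card_fin,
    gaussSum_quadraticChar_pow_four hF hψ, ZMod.card, MulChar.ringHomComp_apply, hcoef,
    map_mul (quadraticChar _), quadraticChar_sq_one' (pow_ne_zero 2 hu), one_mul, harg]
  simp only [legendreSym, Int.cast_prod, eq_intCast, Equiv.trans_apply, Equiv.inv_apply,
    Equiv.coe_mulLeft, Units.val_mul, Units.val_mk0, Units.val_inv_eq_inv_val]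

theorem stmt_14_general (a : Fin 4 → ℤ)
    (p : ℕ) (hp : Nat.Prime p)
    (hpα : ¬ ((p : ℤ) ∣ 2 * (a 0 * a 1 * a 2 * a 3))) (w : Fin 4 → ℤ) :
    ((p : ℤ) ∣ psit a w →
      S1 a p w = (jacobiSym (a 0 * a 1 * a 2 * a 3) p : ℂ) * (p : ℂ) ^ 2 * ((p : ℂ) - 1)) ∧
    (¬ (p : ℤ) ∣ psit a w →
      S1 a p w = -(jacobiSym (a 0 * a 1 * a 2 * a 3) p : ℂ) * (p : ℂ) ^ 2) := by
  have := Fact.mk hp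
  have hp2 : p ≠ 2 := by
    rintro rfl
    exact hpα (dvd_mul_right _ _)
  have hα : ¬ (p : ℤ) ∣ ∏ i, a i := by
    rw [Fin.prod_univ_four]
    exact fun h => hpα (dvd_mul_of_dvd_right h 2)
  rw [S1_prime_eq a w hp2 hα, Fin.prod_univ_four, jacobiSym.legendreSym.to_jacobiSym,
    sum_units_addChar_mul (ZMod.isPrimitive_stdAddChar p), ZMod.card]
  simp only [ZMod.intCast_zmod_eq_zero_iff_dvd]
  exact ⟨fun h => by rw [if_pos h], fun h => by rw [if_neg h]; ring⟩

/-- for odd primes `p ∤ 2α`, `S_{1,p}(w) = χ_p(α)·p²·(p-1)` if `p ∣ ψ̃₁(w)`,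
and `S_{1,p}(w) = -χ_p(α)·p²` otherwise. -/
theorem stmt_14 (a : Fin 4 → ℤ) (ha : ∀ i, a i ≠ 0)
    (p : ℕ) (hp : Nat.Prime p) (hodd : Odd p)
    (hpα : ¬ ((p : ℤ) ∣ 2 * (a 0 * a 1 * a 2 * a 3))) (w : Fin 4 → ℤ) :
    ((p : ℤ) ∣ psit a w →
      S1 a p w = (jacobiSym (a 0 * a 1 * a 2 * a 3) p : ℂ) * (p : ℂ) ^ 2 * ((p : ℂ) - 1)) ∧
    (¬ (p : ℤ) ∣ psit a w →
      S1 a p w = -(jacobiSym (a 0 * a 1 * a 2 * a 3) p : ℂ) * (p : ℂ) ^ 2) :=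
  stmt_14_general a p hp hpα w
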